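/- With the setup of the previous statement, if |Γ| < |Θ|/2 then ‖A − B‖_F² < ‖A − P B Qᵀ‖_F². Equivalently, if ‖A − B‖_F ≥ ‖A − P B Qᵀ‖_F then |Γ| ≥ |Θ|/2. -/

import Mathlib

open Finset Matrix

/-- Squared Frobenius norm of a real matrix. -/
def frobSq {n : ℕ} (M : Matrix (Fin n) (Fin n) ℝ) : ℝ :=
  ∑ i, ∑ j, (M i j) ^ 2

theorem gamma_large_of_no_improvement {n : ℕ}
    (A B : Matrix (Fin n) (Fin n) ℝ)
    (hA : ∀ i j, A i j = 0 ∨ A i j = 1) (hB : ∀ i j, B i j = 0 ∨ B i j = 1)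
    (τ ω : Equiv.Perm (Fin n))
    (P Q : Matrix (Fin n) (Fin n) ℝ)
    (hP : P = τ.permMatrix ℝ) (hQ : Q = ω.permMatrix ℝ)
    (Θ Γ : Finset (Fin n × Fin n))
    (hΘ : Θ = univ.filter (fun p : Fin n × Fin n => B p.1 p.2 ≠ B (τ p.1) (ω p.2)))
    (hΓ : Γ = Θ.filter (fun p : Fin n × Fin n => A p.1 p.2 ≠ B p.1 p.2)) :
    ((Γ.card : ℝ) < Θ.card / 2 → frobSq (A - B) < frobSq (A - P * B * Qᵀ)) ∧
      (Real.sqrt (frobSq (A - B)) ≥ Real.sqrt (frobSq (A - P * B * Qᵀ)) →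
        (Γ.card : ℝ) ≥ Θ.card / 2) := by
  have hentry : ∀ i j, (P * B * Qᵀ) i j = B (τ i) (ω j) := by
    intro i j
    subst hP hQ
    simp [Matrix.mul_apply, Equiv.Perm.permMatrix, PEquiv.toMatrix_apply,
      Equiv.toPEquiv_apply, Finset.mul_sum, transpose_apply, ite_and, Equiv.symm_apply_eq]
  -- pointwise difference formula
  have hterm : ∀ p : Fin n × Fin n,
      (A p.1 p.2 - B (τ p.1) (ω p.2)) ^ 2 - (A p.1 p.2 - B p.1 p.2) ^ 2 =
        (if B p.1 p.2 ≠ B (τ p.1) (ω p.2) then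
          (if A p.1 p.2 ≠ B p.1 p.2 then (-1 : ℝ) else 1) else 0) := by
    intro p
    rcases hA p.1 p.2 with h1 | h1 <;> rcases hB p.1 p.2 with h2 | h2 <;>
      rcases hB (τ p.1) (ω p.2) with h3 | h3 <;>
      simp [h1, h2, h3]
  have key : frobSq (A - P * B * Qᵀ) - frobSq (A - B) =
      (Θ.card : ℝ) - 2 * Γ.card := by
    have : frobSq (A - P * B * Qᵀ) - frobSq (A - B) =
        ∑ p : Fin n × Fin n,
          ((A p.1 p.2 - B (τ p.1) (ω p.2)) ^ 2 - (A p.1 p.2 - B p.1 p.2) ^ 2) := by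
      simp only [frobSq, Matrix.sub_apply, hentry, ← Finset.sum_sub_distrib]
      exact (Fintype.sum_prod_type (fun p : Fin n × Fin n => (A p.1 p.2 - B (τ p.1) (ω p.2)) ^ 2 - (A p.1 p.2 - B p.1 p.2) ^ 2)).symm
    rw [this]
    simp only [hterm]
    rw [← Finset.sum_filter, ← hΘ, Finset.sum_ite, Finset.sum_const, Finset.sum_const, ← hΓ]
    have hcard : (Θ.filter (fun p : Fin n × Fin n => ¬A p.1 p.2 ≠ B p.1 p.2)).card
        = Θ.card - Γ.card := by
      have := Finset.card_filter_add_card_filter_not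
          (p := fun p : Fin n × Fin n => A p.1 p.2 ≠ B p.1 p.2) (s := Θ)
      rw [← hΓ] at this
      omega
    rw [hcard]
    have hle : Γ.card ≤ Θ.card := by
      rw [hΓ]; exact Finset.card_filter_le _ _
    simp only [nsmul_eq_mul, mul_one, mul_neg_one]
    rw [Nat.cast_sub hle]
    ring
  constructor
  · intro h
    have : 0 < frobSq (A - P * B * Qᵀ) - frobSq (A - B) := by
      rw [key]; linarith
    linarith
  · intro h
    by_contra hc
    push_neg at hc
    have h1 : frobSq (A - B) < frobSq (A - P * B * Qᵀ) := by
      have : 0 < frobSq (A - P * B * Qᵀ) - frobSq (A - B) := by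
        rw [key]; linarith
      linarith
    have h0 : 0 ≤ frobSq (A - B) := by
      apply Finset.sum_nonneg; intro i _
      exact Finset.sum_nonneg fun j _ => sq_nonneg _
    have := Real.sqrt_lt_sqrt h0 h1
    linarith
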